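/- arXiv:2110.08605 — 2 statements merged into one kernel-verified Lean document; each statement's English description precedes it below -/
import Mathlib

section
/- (Lemma 1, Cases n ≤ n_1.) For every nonempty subset C ⊆ I_1, the population objective satisfies the exact identity G(C) = (|C|/N) · S_{11}/S̃_{1·}. In particular G(I_1) = τ_1 · S_{11}/S̃_{1·}, and for every nonempty C ⊊ I_1, G(C) − G(I_1) = −( (n_1 − |C|)/N ) · S_{11}/S̃_{1·}. -/
/-!
For `C` inside the first block, the first row of the confusion matrix is `c • e₁` with
`c = |C|/N`, and the two rows of `R(C)` always add up to `τ`. Hence the numerator of `G(C)` is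
`c² S₁₁` and the denominator is `c · (S τ)₁ = c · S̃₁`, so `G(C) = c · S₁₁ / S̃₁`.
-/

open BigOperators
open Finset Matrix

theorem sum_sum_mul_mul_eq_dotProduct_mulVec {ι α : Type*} [Fintype ι] [CommSemiring α]
    (x y : ι → α) (S : Matrix ι ι α) :
    ∑ i, ∑ j, x i * S i j * y j = x ⬝ᵥ (S *ᵥ y) := by
  simp only [dotProduct, mulVec, Finset.mul_sum, mul_assoc]

theorem single_dotProduct_mulVec_div {ι α : Type*} [Fintype ι] [DecidableEq ι] [Field α]
    (S : Matrix ι ι α) (k : ι) (c : α) (y : ι → α) :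
    (Pi.single k c ⬝ᵥ S *ᵥ Pi.single k c) /
        (Pi.single k c ⬝ᵥ S *ᵥ Pi.single k c + Pi.single k c ⬝ᵥ S *ᵥ y) =
      c * (S k k / (S *ᵥ (Pi.single k c + y)) k) := by
  rw [← dotProduct_add, ← mulVec_add, single_dotProduct, single_dotProduct, mulVec_single]
  rcases eq_or_ne c 0 with rfl | hc
  · simp
  · simp only [Pi.smul_apply, col_apply, op_smul_eq_mul]
    rw [mul_div_mul_left _ _ hc, mul_div_right_comm, mul_comm]

theorem card_filter_eq_single_of_subset_fiber {V κ : Type*} [Fintype V] [DecidableEq κ]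
    (g : V → κ) {C : Finset V} {k : κ}
    (hC : C ⊆ univ.filter (g · = k)) (b : κ) :
    #(C.filter (g · = b)) = (Pi.single k #C : κ → ℕ) b := by
  have hg : ∀ u ∈ C, g u = k := fun u hu => (mem_filter.mp (hC hu)).2
  rcases eq_or_ne b k with rfl | hb
  · rw [Pi.single_eq_same, filter_true_of_mem hg]
  · rw [Pi.single_eq_of_ne hb, card_eq_zero, filter_eq_empty_iff]
    exact fun u hu h => hb (h ▸ hg u hu)

theorem card_filter_add_card_filter_compl {V : Type*} [Fintype V] [DecidableEq V]
    (C : Finset V) (p : V → Prop) [DecidablePred p] :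
    #(C.filter p) + #(Cᶜ.filter p) = #(univ.filter p) := by
  rw [← card_union_of_disjoint (disjoint_filter_filter disjoint_compl_right),
    ← filter_union, union_compl]

theorem stmt_6_general (N K : ℕ)
    (g : Fin N → Fin K)
    (k₁ : Fin K)
    (S : Matrix (Fin K) (Fin K) ℝ)
    (τ : Fin K → ℝ)
    (hτ : ∀ k, τ k = ((Finset.univ.filter fun u => g u = k).card : ℝ) / N)
    (St : Fin K → ℝ) (hSt : ∀ i, St i = ∑ j, S i j * τ j)
    (I₁ : Finset (Fin N)) (hI₁ : I₁ = Finset.univ.filter fun u => g u = k₁)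
    (R : Finset (Fin N) → Fin 2 → Fin K → ℝ)
    (hR0 : ∀ C b, R C 0 b = ((C.filter fun u => g u = b).card : ℝ) / N)
    (hR1 : ∀ C b, R C 1 b = (((Cᶜ).filter fun u => g u = b).card : ℝ) / N)
    (G : Finset (Fin N) → ℝ)
    (hG : ∀ C, G C = (∑ i, ∑ j, R C 0 i * S i j * R C 0 j) /
        ((∑ i, ∑ j, R C 0 i * S i j * R C 0 j) + ∑ i, ∑ j, R C 0 i * S i j * R C 1 j)) :
    (∀ C : Finset (Fin N), C.Nonempty → C ⊆ I₁ →
        G C = ((C.card : ℝ) / N) * (S k₁ k₁ / St k₁)) ∧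
    G I₁ = τ k₁ * (S k₁ k₁ / St k₁) ∧
    (∀ C : Finset (Fin N), C.Nonempty → C ⊂ I₁ →
        G C - G I₁ = -(((I₁.card : ℝ) - (C.card : ℝ)) / N) * (S k₁ k₁ / St k₁)) := by
  have hR0_single : ∀ C ⊆ I₁, R C 0 = Pi.single k₁ ((C.card : ℝ) / N) := by
    intro C hC
    funext b
    rw [hR0, card_filter_eq_single_of_subset_fiber g (hI₁ ▸ hC)]
    rcases eq_or_ne b k₁ with rfl | hb <;> simp [*]
  have hR_add : ∀ C, R C 0 + R C 1 = τ := by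
    intro C
    funext b
    rw [Pi.add_apply, hR0, hR1, hτ, ← add_div, ← Nat.cast_add,
      card_filter_add_card_filter_compl]
  have hG_subset : ∀ C ⊆ I₁, G C = ((C.card : ℝ) / N) * (S k₁ k₁ / St k₁) := by
    intro C hC
    rw [hG, sum_sum_mul_mul_eq_dotProduct_mulVec, sum_sum_mul_mul_eq_dotProduct_mulVec,
      hR0_single C hC, single_dotProduct_mulVec_div, ← hR0_single C hC, hR_add, hSt]
    rfl
  refine ⟨fun C _ hC => hG_subset C hC, ?_, fun C _ hC => ?_⟩
  · rw [hG_subset I₁ subset_rfl, hτ, ← hI₁]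
  · rw [hG_subset C hC.subset, hG_subset I₁ subset_rfl]
    ring

theorem stmt_6 (N K : ℕ) (hN : 1 ≤ N) (hK : 2 ≤ K)
    (g : Fin N → Fin K)
    (k₁ : Fin K) (hk₁ : (k₁ : ℕ) = 0)
    (S : Matrix (Fin K) (Fin K) ℝ) (hSsymm : S.IsSymm) (hSpos : ∀ i j, 0 < S i j)
    (τ : Fin K → ℝ)
    (hτ : ∀ k, τ k = ((Finset.univ.filter fun u => g u = k).card : ℝ) / N)
    (St : Fin K → ℝ) (hSt : ∀ i, St i = ∑ j, S i j * τ j)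
    (I₁ : Finset (Fin N)) (hI₁ : I₁ = Finset.univ.filter fun u => g u = k₁)
    (hI₁ne : I₁.Nonempty)
    (R : Finset (Fin N) → Fin 2 → Fin K → ℝ)
    (hR0 : ∀ C b, R C 0 b = ((C.filter fun u => g u = b).card : ℝ) / N)
    (hR1 : ∀ C b, R C 1 b = (((Cᶜ).filter fun u => g u = b).card : ℝ) / N)
    (G : Finset (Fin N) → ℝ)
    (hG : ∀ C, G C = (∑ i, ∑ j, R C 0 i * S i j * R C 0 j) /
        ((∑ i, ∑ j, R C 0 i * S i j * R C 0 j) + ∑ i, ∑ j, R C 0 i * S i j * R C 1 j)) :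
    (∀ C : Finset (Fin N), C.Nonempty → C ⊆ I₁ →
        G C = ((C.card : ℝ) / N) * (S k₁ k₁ / St k₁)) ∧
    G I₁ = τ k₁ * (S k₁ k₁ / St k₁) ∧
    (∀ C : Finset (Fin N), C.Nonempty → C ⊂ I₁ →
        G C - G I₁ = -(((I₁.card : ℝ) - (C.card : ℝ)) / N) * (S k₁ k₁ / St k₁)) :=
  stmt_6_general N K g k₁ S τ hτ St hSt I₁ hI₁ R hR0 hR1 G hG
end

section
/- (Lemma 2, Case n > n_1.) Assume c := S_{11}·min_{2≤i≤K} S̃_{i·} − 2·max_{2≤j≤K} S_{1j}·S̃_{1·} > 0 and set ε := c·τ_1 / (2·U_θ·S̃_{1·}·max_{2≤i,j≤K} S_{ij}). Then for every subset C ⊆ {1,…,N} with I_1 ⊆ C and |C| − n_1 ≤ ε·N, one has G̃(C) − G̃(I_1) ≤ −( 2·S̃_{1·}²/c + K·min_{2≤i≤K} S̃_{i·} / max_{2≤i,j≤K} S_{ij} )^{-1} · (L_θ/N)·(|C| − n_1). -/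
/-!
Let `x` be the first row of `R̃(C)` and `t = ∑_{b ≠ 1} x_b`. Since `I₁ ⊆ C`, `x₁ = τ₁`, and `t`
lies between `L_θ (|C| - n₁) / N` and `U_θ (|C| - n₁) / N`. The two rows of `R̃(C)` add up to `τ`,
so the denominator of `G̃(C)` is `∑ᵢ xᵢ S̃ᵢ` and `G̃(C) = xᵀ S x / xᵀ S̃`. Bounding the numerator
above by `S₁₁ τ₁² + 2 τ₁ max S₁ⱼ t + max Sᵢⱼ t²` and the denominator below by `τ₁ S̃₁ + min S̃ᵢ t`
leaves a one-variable inequality: this bound minus `G̃(I₁) = S₁₁ τ₁ / S̃₁` equals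
`-t (c τ₁ - max Sᵢⱼ S̃₁ t) / ((τ₁ S̃₁ + min S̃ᵢ t) S̃₁)`, and the size condition on `C` gives
`max Sᵢⱼ S̃₁ t ≤ c τ₁ / 2`.
-/

open Finset

theorem div_sub_div_le_neg_inv_mul {a σ μ m s₁₁ m₁ c κ t : ℝ} (ha : 0 < a) (hσ : 0 < σ)
    (hμ : 0 < μ) (hm : 0 < m) (hc : c = s₁₁ * μ - 2 * m₁ * σ) (hc₀ : 0 < c) (hκ : 1 ≤ κ)
    (ht : 0 ≤ t) (hsmall : 2 * σ * m * t ≤ c * a) :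
    (s₁₁ * a ^ 2 + 2 * a * m₁ * t + m * t ^ 2) / (a * σ + μ * t) - s₁₁ * a / σ
      ≤ -(2 * σ ^ 2 / c + κ * μ / m)⁻¹ * t := by
  set M := 2 * σ ^ 2 / c + κ * μ / m
  have hM : 0 < M := by positivity
  have hDM : (a * σ + μ * t) * σ ≤ M * (c * a - m * σ * t) := by
    have hMcm : M * (c * m) = 2 * σ ^ 2 * m + κ * μ * c := by
      simp only [M]; field_simp
    have : (a * σ + μ * t) * σ * (c * m) ≤ M * (c * a - m * σ * t) * (c * m) := by
      rw [mul_right_comm M, hMcm]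
      -- the difference is `σ²m (ca - 2σmt) + μcκ (ca - 2σmt) + μc (κ - 1) mσt`
      nlinarith [mul_nonneg (by positivity : 0 ≤ σ ^ 2 * m) (sub_nonneg.2 hsmall),
        mul_nonneg (by positivity : 0 ≤ μ * c * κ) (sub_nonneg.2 hsmall),
        mul_nonneg (by positivity : 0 ≤ μ * c * m * σ * t) (sub_nonneg.2 hκ)]
    exact le_of_mul_le_mul_right this (by positivity)
  calc (s₁₁ * a ^ 2 + 2 * a * m₁ * t + m * t ^ 2) / (a * σ + μ * t) - s₁₁ * a / σ
      = -(t * (c * a - m * σ * t)) / ((a * σ + μ * t) * σ) := by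
        rw [hc]; field_simp; ring
    _ ≤ -(t * (M⁻¹ * ((a * σ + μ * t) * σ))) / ((a * σ + μ * t) * σ) := by
        gcongr
        rwa [inv_mul_le_iff₀ hM]
    _ = -M⁻¹ * t := by field_simp

section QuadraticForm

variable {ι : Type*} [Fintype ι] {S : Matrix ι ι ℝ} {x v : ι → ℝ} {k : ι}

theorem sum_sum_mul_mul_add_sum_sum_mul_mul {y z : ι → ℝ} (hxyz : ∀ j, x j + y j = z j)
    (hv : ∀ i, v i = ∑ j, S i j * z j) :
    ∑ i, ∑ j, x i * S i j * x j + ∑ i, ∑ j, x i * S i j * y j = ∑ i, x i * v i := by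
  simp only [← sum_add_distrib, hv, mul_sum, ← hxyz]
  exact sum_congr rfl fun i _ => sum_congr rfl fun j _ => by ring

theorem sum_sum_mul_mul_le [DecidableEq ι] {m₁ m : ℝ} (hS : S.IsSymm) (hx : ∀ i, 0 ≤ x i)
    (hm₁ : ∀ j, j ≠ k → S k j ≤ m₁) (hm : ∀ i j, i ≠ k → j ≠ k → S i j ≤ m) :
    ∑ i, ∑ j, x i * S i j * x j ≤
      S k k * x k ^ 2 + 2 * x k * m₁ * ∑ j ∈ univ.erase k, x j
        + m * (∑ j ∈ univ.erase k, x j) ^ 2 := by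
  have hrow : ∀ i, ∑ j, x i * S i j * x j
      = x i * S i k * x k + ∑ j ∈ univ.erase k, x i * S i j * x j := fun i =>
    (add_sum_erase _ _ (mem_univ k)).symm
  rw [← add_sum_erase _ _ (mem_univ k), hrow, sum_congr rfl fun i _ => hrow i, sum_add_distrib]
  have hcross : ∑ j ∈ univ.erase k, x k * S k j * x j ≤ x k * m₁ * ∑ j ∈ univ.erase k, x j := by
    rw [mul_sum]
    exact sum_le_sum fun j hj => by
      have := hm₁ j (ne_of_mem_erase hj)
      nlinarith [mul_nonneg (hx k) (hx j)]
  have hcross' : ∑ i ∈ univ.erase k, x i * S i k * x k ≤ x k * m₁ * ∑ j ∈ univ.erase k, x j := by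
    refine le_of_eq_of_le (sum_congr rfl fun i _ => ?_) hcross
    rw [hS.apply k i]; ring
  have hrest : ∑ i ∈ univ.erase k, ∑ j ∈ univ.erase k, x i * S i j * x j
      ≤ m * (∑ j ∈ univ.erase k, x j) ^ 2 := by
    rw [sq, sum_mul_sum, mul_sum]
    refine sum_le_sum fun i hi => ?_
    rw [mul_sum]
    exact sum_le_sum fun j hj => by
      have := hm i j (ne_of_mem_erase hi) (ne_of_mem_erase hj)
      nlinarith [mul_nonneg (hx i) (hx j)]
  linarith

theorem add_mul_sum_erase_le_sum_mul [DecidableEq ι] {μ : ℝ} (hx : ∀ i, 0 ≤ x i)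
    (hμ : ∀ i, i ≠ k → μ ≤ v i) :
    x k * v k + μ * ∑ j ∈ univ.erase k, x j ≤ ∑ i, x i * v i := by
  rw [← add_sum_erase _ _ (mem_univ k), mul_sum]
  gcongr x k * v k + ?_
  refine sum_le_sum fun i hi => ?_
  rw [mul_comm]
  exact mul_le_mul_of_nonneg_left (hμ i (ne_of_mem_erase hi)) (hx i)

theorem sum_sum_mul_mul_div_of_eq_single (hx : ∀ j, j ≠ k → x j = 0) (hxk : x k ≠ 0)
    (hvk : v k ≠ 0) :
    (∑ i, ∑ j, x i * S i j * x j) / ∑ i, x i * v i = S k k * x k / v k := by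
  rw [Fintype.sum_eq_single k fun i hi => by simp [hx i hi],
    Fintype.sum_eq_single k fun j hj => by simp [hx j hj],
    Fintype.sum_eq_single k fun i hi => by simp [hx i hi]]
  field_simp

theorem sum_sum_mul_mul_div_sub_le [DecidableEq ι] {μ m₁ m c κ : ℝ} (hS : S.IsSymm)
    (hS₀ : ∀ i j, 0 ≤ S i j) (hx : ∀ i, 0 ≤ x i) (hxk : 0 < x k) (hvk : 0 < v k) (hμ : 0 < μ)
    (hv : ∀ i, i ≠ k → μ ≤ v i) (hm₁ : ∀ j, j ≠ k → S k j ≤ m₁)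
    (hm : ∀ i j, i ≠ k → j ≠ k → S i j ≤ m) (hm₀ : 0 < m)
    (hc : c = S k k * μ - 2 * m₁ * v k) (hc₀ : 0 < c) (hκ : 1 ≤ κ)
    (hsmall : 2 * v k * m * ∑ j ∈ univ.erase k, x j ≤ c * x k) :
    (∑ i, ∑ j, x i * S i j * x j) / (∑ i, x i * v i) - S k k * x k / v k
      ≤ -(2 * v k ^ 2 / c + κ * μ / m)⁻¹ * ∑ j ∈ univ.erase k, x j := by
  set t := ∑ j ∈ univ.erase k, x j
  have ht : 0 ≤ t := sum_nonneg fun j _ => hx j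
  have hA₀ : 0 ≤ ∑ i, ∑ j, x i * S i j * x j :=
    sum_nonneg fun i _ => sum_nonneg fun j _ => mul_nonneg (mul_nonneg (hx i) (hS₀ i j)) (hx j)
  have hA := sum_sum_mul_mul_le hS hx hm₁ hm
  calc _ ≤ (S k k * x k ^ 2 + 2 * x k * m₁ * t + m * t ^ 2) / (x k * v k + μ * t)
        - S k k * x k / v k := by
        gcongr
        · exact hA₀.trans hA
        · exact add_mul_sum_erase_le_sum_mul hx hv
    _ ≤ _ := div_sub_div_le_neg_inv_mul hxk hvk hμ hm₀ hc hc₀ hκ ht hsmall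

end QuadraticForm

theorem sum_filter_add_sum_compl_filter {α M : Type*} [Fintype α] [DecidableEq α]
    [AddCommMonoid M] (C : Finset α) (p : α → Prop) [DecidablePred p] (f : α → M) :
    ∑ u ∈ C with p u, f u + ∑ u ∈ Cᶜ with p u, f u = ∑ u with p u, f u := by
  simp only [sum_filter]
  exact sum_add_sum_compl C _

theorem filter_eq_filter_univ_of_subset {α : Type*} [Fintype α] {C : Finset α} {p : α → Prop}
    [DecidablePred p] (h : ({u | p u} : Finset α) ⊆ C) :
    {u ∈ C | p u} = ({u | p u} : Finset α) := by
  ext u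
  simp only [mem_filter, mem_univ, true_and, and_iff_right_iff_imp]
  exact fun hu => h (by simpa using hu)

theorem filter_filter_eq_empty_of_ne {α β : Type*} [Fintype α] [DecidableEq β] (g : α → β)
    {b k : β} (hb : b ≠ k) : {u ∈ ({u | g u = k} : Finset α) | g u = b} = ∅ := by
  simp only [filter_filter, filter_eq_empty_iff, mem_univ, true_implies, not_and]
  intro u hu; rw [hu]; exact hb.symm

theorem sum_erase_sum_filter {α β M : Type*} [Fintype β] [DecidableEq β] [AddCommMonoid M]
    (C : Finset α) (g : α → β) (k : β) (f : α → M) :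
    ∑ b ∈ univ.erase k, ∑ u ∈ C with g u = b, f u = ∑ u ∈ C with g u ≠ k, f u := by
  simp [sum_fiberwise_eq_sum_filter]

theorem sum_erase_sum_filter_div_mem_Icc {α β : Type*} [Fintype α] [Fintype β] [DecidableEq β]
    {g : α → β} {θ : α → ℝ} {L U N : ℝ} {C : Finset α} {k : β} (hN : 0 ≤ N)
    (hθ : ∀ u, L ≤ θ u ∧ θ u ≤ U) (hC : ({u | g u = k} : Finset α) ⊆ C) :
    ∑ b ∈ univ.erase k, (∑ u ∈ C with g u = b, θ u) / N ∈
      Set.Icc (L / N * (#C - #{u | g u = k})) (U / N * (#C - #{u | g u = k})) := by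
  have hcard : (#C : ℝ) - #{u | g u = k} = #{u ∈ C | g u ≠ k} := by
    rw [← filter_eq_filter_univ_of_subset hC,
      ← card_filter_add_card_filter_not (s := C) (g · = k)]
    push_cast; ring
  rw [← sum_div, sum_erase_sum_filter, hcard, div_mul_eq_mul_div, div_mul_eq_mul_div]
  constructor <;> gcongr
  · simpa [mul_comm] using card_nsmul_le_sum _ _ _ fun u _ => (hθ u).1
  · simpa [mul_comm] using sum_le_card_nsmul _ _ _ fun u _ => (hθ u).2

theorem stmt_9_general (N K : ℕ) (hN : 1 ≤ N) (hK : 2 ≤ K)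
    (g : Fin N → Fin K)
    (k₁ : Fin K)
    (S : Matrix (Fin K) (Fin K) ℝ) (hSsymm : S.IsSymm) (hSpos : ∀ i j, 0 < S i j)
    (τ : Fin K → ℝ)
    (hτ : ∀ k, τ k = ((Finset.univ.filter fun u => g u = k).card : ℝ) / N)
    (St : Fin K → ℝ) (hSt : ∀ i, St i = ∑ j, S i j * τ j)
    (I₁ : Finset (Fin N)) (hI₁ : I₁ = Finset.univ.filter fun u => g u = k₁)
    (hI₁ne : I₁.Nonempty)
    (θ : Fin N → ℝ) (Lθ Uθ : ℝ) (hLθ : 0 < Lθ)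
    (hθ : ∀ u, Lθ ≤ θ u ∧ θ u ≤ Uθ)
    (hident : ∀ k : Fin K, ∑ u ∈ Finset.univ.filter (fun u => g u = k), θ u
        = ((Finset.univ.filter fun u => g u = k).card : ℝ))
    (Rt : Finset (Fin N) → Fin 2 → Fin K → ℝ)
    (hRt0 : ∀ C b, Rt C 0 b = (∑ u ∈ C.filter fun u => g u = b, θ u) / N)
    (hRt1 : ∀ C b, Rt C 1 b = (∑ u ∈ (Cᶜ).filter fun u => g u = b, θ u) / N)
    (Gt : Finset (Fin N) → ℝ)
    (hGt : ∀ C, Gt C = (∑ i, ∑ j, Rt C 0 i * S i j * Rt C 0 j) /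
        ((∑ i, ∑ j, Rt C 0 i * S i j * Rt C 0 j)
          + ∑ i, ∑ j, Rt C 0 i * S i j * Rt C 1 j))
    (minSt : ℝ) (hminSt : ∀ i : Fin K, i ≠ k₁ → minSt ≤ St i)
    (hminSt' : ∃ i : Fin K, i ≠ k₁ ∧ minSt = St i)
    (maxS1 : ℝ) (hmaxS1 : ∀ j : Fin K, j ≠ k₁ → S k₁ j ≤ maxS1)
    (maxS : ℝ) (hmaxS : ∀ i j : Fin K, i ≠ k₁ → j ≠ k₁ → S i j ≤ maxS)
    (c : ℝ) (hc : c = S k₁ k₁ * minSt - 2 * maxS1 * St k₁) (hcpos : 0 < c)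
    (ε : ℝ) (hε : ε = c * τ k₁ / (2 * Uθ * St k₁ * maxS)) :
    ∀ C : Finset (Fin N), I₁ ⊆ C →
      (C.card : ℝ) - (I₁.card : ℝ) ≤ ε * N →
      Gt C - Gt I₁ ≤
        -(2 * St k₁ ^ 2 / c + K * minSt / maxS)⁻¹ *
          ((Lθ / N) * ((C.card : ℝ) - (I₁.card : ℝ))) := by
  intro C hsub hcard
  obtain ⟨i₀, hi₀, rfl⟩ := hminSt'
  have hN₀ : (0 : ℝ) < N := by exact_mod_cast hN
  have hUθ : 0 < Uθ := hLθ.trans_le ((hθ ⟨0, hN⟩).1.trans (hθ ⟨0, hN⟩).2)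
  have hmaxS₀ : 0 < maxS := (hSpos i₀ i₀).trans_le (hmaxS i₀ i₀ hi₀ hi₀)
  have hτ₁ : 0 < τ k₁ := by
    rw [hτ]; exact div_pos (by exact_mod_cast (hI₁ ▸ hI₁ne).card_pos) hN₀
  have hSt₀ : ∀ i, 0 < St i := fun i => by
    rw [hSt]
    exact sum_pos' (fun j _ => mul_nonneg (hSpos i j).le (by rw [hτ]; positivity))
      ⟨k₁, mem_univ _, mul_pos (hSpos i k₁) hτ₁⟩
  have hobj : ∀ C', Gt C' = (∑ i, ∑ j, Rt C' 0 i * S i j * Rt C' 0 j) / ∑ i, Rt C' 0 i * St i :=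
    fun C' => by
      rw [hGt, sum_sum_mul_mul_add_sum_sum_mul_mul (fun b => by
        rw [hRt0, hRt1, hτ, ← add_div, sum_filter_add_sum_compl_filter, hident]) hSt]
  have hfull : ∀ C', I₁ ⊆ C' → Rt C' 0 k₁ = τ k₁ := fun C' h => by
    rw [hRt0, hτ, filter_eq_filter_univ_of_subset (hI₁ ▸ h), hident]
  have hI₁_ne : ∀ b, b ≠ k₁ → Rt I₁ 0 b = 0 := fun b hb => by
    rw [hRt0, hI₁, filter_filter_eq_empty_of_ne g hb, sum_empty, zero_div]
  obtain ⟨ht_lower, ht_upper⟩ := sum_erase_sum_filter_div_mem_Icc hN₀.le hθ (hI₁ ▸ hsub)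
  simp only [← hRt0, ← hI₁] at ht_lower ht_upper
  have hsmall : 2 * St k₁ * maxS * ∑ b ∈ univ.erase k₁, Rt C 0 b ≤ c * Rt C 0 k₁ := calc
    _ ≤ 2 * St k₁ * maxS * (Uθ / N * (ε * N)) := by
      have := hSt₀ k₁
      gcongr
      exact ht_upper.trans (by gcongr)
    _ = c * Rt C 0 k₁ := by rw [hfull C hsub, hε]; field_simp [(hSt₀ k₁).ne']
  rw [hobj, hobj, sum_sum_mul_mul_div_of_eq_single hI₁_ne (hfull I₁ subset_rfl ▸ hτ₁.ne')
    (hSt₀ k₁).ne', hfull I₁ subset_rfl, ← hfull C hsub]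
  refine (sum_sum_mul_mul_div_sub_le (κ := K) hSsymm (fun i j => (hSpos i j).le)
    (fun b => by rw [hRt0]; exact div_nonneg (sum_nonneg fun u _ => hLθ.le.trans (hθ u).1) hN₀.le)
    (hfull C hsub ▸ hτ₁) (hSt₀ k₁) (hSt₀ i₀) hminSt hmaxS1 hmaxS hmaxS₀ hc hcpos
    (by exact_mod_cast (by omega : 1 ≤ K)) hsmall).trans ?_
  have := hSt₀ i₀
  rw [neg_mul, neg_mul, neg_le_neg_iff]
  gcongr

theorem stmt_9 (N K : ℕ) (hN : 1 ≤ N) (hK : 2 ≤ K)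
    (g : Fin N → Fin K)
    (k₁ : Fin K) (hk₁ : (k₁ : ℕ) = 0)
    (S : Matrix (Fin K) (Fin K) ℝ) (hSsymm : S.IsSymm) (hSpos : ∀ i j, 0 < S i j)
    (τ : Fin K → ℝ)
    (hτ : ∀ k, τ k = ((Finset.univ.filter fun u => g u = k).card : ℝ) / N)
    (St : Fin K → ℝ) (hSt : ∀ i, St i = ∑ j, S i j * τ j)
    (I₁ : Finset (Fin N)) (hI₁ : I₁ = Finset.univ.filter fun u => g u = k₁)
    (hI₁ne : I₁.Nonempty)
    (θ : Fin N → ℝ) (Lθ Uθ : ℝ) (hLθ : 0 < Lθ)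
    (hθ : ∀ u, Lθ ≤ θ u ∧ θ u ≤ Uθ)
    (hident : ∀ k : Fin K, ∑ u ∈ Finset.univ.filter (fun u => g u = k), θ u
        = ((Finset.univ.filter fun u => g u = k).card : ℝ))
    (Rt : Finset (Fin N) → Fin 2 → Fin K → ℝ)
    (hRt0 : ∀ C b, Rt C 0 b = (∑ u ∈ C.filter fun u => g u = b, θ u) / N)
    (hRt1 : ∀ C b, Rt C 1 b = (∑ u ∈ (Cᶜ).filter fun u => g u = b, θ u) / N)
    (Gt : Finset (Fin N) → ℝ)
    (hGt : ∀ C, Gt C = (∑ i, ∑ j, Rt C 0 i * S i j * Rt C 0 j) /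
        ((∑ i, ∑ j, Rt C 0 i * S i j * Rt C 0 j)
          + ∑ i, ∑ j, Rt C 0 i * S i j * Rt C 1 j))
    (minSt : ℝ) (hminSt : ∀ i : Fin K, i ≠ k₁ → minSt ≤ St i)
    (hminSt' : ∃ i : Fin K, i ≠ k₁ ∧ minSt = St i)
    (maxS1 : ℝ) (hmaxS1 : ∀ j : Fin K, j ≠ k₁ → S k₁ j ≤ maxS1)
    (hmaxS1' : ∃ j : Fin K, j ≠ k₁ ∧ maxS1 = S k₁ j)
    (maxS : ℝ) (hmaxS : ∀ i j : Fin K, i ≠ k₁ → j ≠ k₁ → S i j ≤ maxS)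
    (hmaxS' : ∃ i j : Fin K, i ≠ k₁ ∧ j ≠ k₁ ∧ maxS = S i j)
    (c : ℝ) (hc : c = S k₁ k₁ * minSt - 2 * maxS1 * St k₁) (hcpos : 0 < c)
    (ε : ℝ) (hε : ε = c * τ k₁ / (2 * Uθ * St k₁ * maxS)) :
    ∀ C : Finset (Fin N), I₁ ⊆ C →
      (C.card : ℝ) - (I₁.card : ℝ) ≤ ε * N →
      Gt C - Gt I₁ ≤
        -(2 * St k₁ ^ 2 / c + K * minSt / maxS)⁻¹ *
          ((Lθ / N) * ((C.card : ℝ) - (I₁.card : ℝ))) :=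
  stmt_9_general N K hN hK g k₁ S hSsymm hSpos τ hτ St hSt I₁ hI₁ hI₁ne θ Lθ Uθ hLθ hθ hident Rt
    hRt0 hRt1 Gt hGt minSt hminSt hminSt' maxS1 hmaxS1 maxS hmaxS c hc hcpos ε hε
end
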